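/- arXiv:2401.12197 — 3 statements merged into one kernel-verified Lean document; each statement's English description precedes it below -/
import Mathlib

section
/- Let {Z_n} be i.i.d. Bernoulli(p) random variables. Then the probability of the event {for all n ≥ 1, Z_1 + ... + Z_n > n/2} tends to 1 as p → 1. -/
open MeasureTheory ProbabilityTheory Finset
open scoped ENNReal

/-!
Let `q = 1 - p`. If the successes up to time `n` are not a strict majority, then some
`⌈n/2⌉` of the first `n` trials all fail, which by independence and a union bound over
these subsets has probability at most `2ⁿ q^⌈n/2⌉ ≤ (4q)^⌈n/2⌉`. Summing over `n ≥ 1`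
bounds the probability that the majority is ever lost by `2 · 4q / (1 - 4q) ≤ 16 q`,
which tends to `0` as `p → 1`.
-/

lemma measure_preimage_singleton_of_map_eq_toMeasure {Ω α : Type*} [MeasurableSpace Ω]
    [MeasurableSpace α] [MeasurableSingletonClass α] {μ : Measure Ω} {X : Ω → α} {P : PMF α}
    (h : μ.map X = P.toMeasure) (a : α) : μ (X ⁻¹' {a}) = P a := by
  have hX : AEMeasurable X μ := AEMeasurable.of_map_ne_zero (h ▸ IsProbabilityMeasure.ne_zero _)
  rw [← Measure.map_apply_of_aemeasurable hX (measurableSet_singleton a), h,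
    PMF.toMeasure_apply_singleton _ _ (measurableSet_singleton a)]

lemma ENNReal.tsum_pow_div_two_add_one (r : ℝ≥0∞) :
    ∑' n : ℕ, r ^ (n / 2 + 1) = 2 * (r * (1 - r)⁻¹) := by
  rw [← ENNReal.tsum_geometric_add_one, ← tsum_even_add_odd ENNReal.summable ENNReal.summable,
    two_mul]
  congr 1 <;> exact tsum_congr fun k => by congr 1; omega

lemma ENNReal.inv_one_sub_le_two {r : ℝ≥0∞} (hr : r ≤ 2⁻¹) : (1 - r)⁻¹ ≤ 2 := by
  rw [ENNReal.inv_le_iff_inv_le]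
  calc (2 : ℝ≥0∞)⁻¹ = 1 - 2⁻¹ := by rw [ENNReal.one_sub_inv_two]
    _ ≤ 1 - r := tsub_le_tsub_left hr 1

namespace ProbabilityTheory

section Trials

variable {Ω ι β : Type*} [MeasurableSpace Ω] [MeasurableSpace β] {μ : Measure Ω}
  {Z : ι → Ω → β} {A : Set β} {q : ℝ≥0∞}

lemma iIndepFun.measure_iInter_preimage_eq_pow (hZ : iIndepFun Z μ) (hA : MeasurableSet A)
    (hq : ∀ i, μ (Z i ⁻¹' A) = q) (S : Finset ι) : μ (⋂ i ∈ S, Z i ⁻¹' A) = q ^ #S := by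
  rw [hZ.measure_inter_preimage_eq_mul S fun _ _ => hA, prod_congr rfl fun i _ => hq i,
    prod_const]

lemma iIndepFun.measure_le_card_filter_le [DecidablePred (· ∈ A)] (hZ : iIndepFun Z μ)
    (hA : MeasurableSet A) (hq : ∀ i, μ (Z i ⁻¹' A) = q) (s : Finset ι) (k : ℕ) :
    μ {ω | k ≤ #{i ∈ s | Z i ω ∈ A}} ≤ (#s).choose k * q ^ k := by
  have hcover : {ω | k ≤ #{i ∈ s | Z i ω ∈ A}} ⊆ ⋃ S ∈ s.powersetCard k, ⋂ i ∈ S, Z i ⁻¹' A := by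
    intro ω hω
    obtain ⟨S, hS, hSk⟩ := exists_subset_card_eq hω
    simp only [Set.mem_iUnion, Set.mem_iInter, Set.mem_preimage, mem_powersetCard]
    exact ⟨S, ⟨hS.trans (filter_subset _ _), hSk⟩, fun i hi => (mem_filter.1 (hS hi)).2⟩
  calc μ {ω | k ≤ #{i ∈ s | Z i ω ∈ A}}
      ≤ ∑ S ∈ s.powersetCard k, μ (⋂ i ∈ S, Z i ⁻¹' A) :=
        (measure_mono hcover).trans (measure_biUnion_finset_le _ _)
    _ = (#s).choose k * q ^ k := by
        rw [sum_congr rfl fun S hS => (hZ.measure_iInter_preimage_eq_pow hA hq S).trans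
          (by rw [(mem_powersetCard.1 hS).2]), sum_const, card_powersetCard, nsmul_eq_mul]

end Trials

section Majority

variable {Ω : Type*} [MeasurableSpace Ω] {μ : Measure Ω} {Z : ℕ → Ω → Bool} {q : ℝ≥0∞}

lemma iIndepFun.measure_two_mul_card_le (hZ : iIndepFun Z μ)
    (hq : ∀ i, μ (Z i ⁻¹' {false}) = q) (n : ℕ) :
    μ {ω | 2 * #{i ∈ range n | Z i ω} ≤ n} ≤ (4 * q) ^ (n - n / 2) := by
  set k := n - n / 2
  have hsub : {ω | 2 * #{i ∈ range n | Z i ω} ≤ n} ⊆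
      {ω | k ≤ #{i ∈ range n | Z i ω ∈ ({false} : Set Bool)}} := by
    intro ω hω
    have hsplit := card_filter_add_card_filter_not (s := range n) (fun i => Z i ω)
    simp only [Set.mem_ofPred_eq, Set.mem_singleton_iff, Bool.not_eq_true, card_range]
      at hω hsplit ⊢
    omega
  have hchoose : ((n.choose k : ℕ) : ℝ≥0∞) ≤ 4 ^ k := by
    calc ((n.choose k : ℕ) : ℝ≥0∞) ≤ 2 ^ n := by exact_mod_cast Nat.choose_le_two_pow n k
      _ ≤ 2 ^ (2 * k) := pow_le_pow_right₀ one_le_two (by omega)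
      _ = 4 ^ k := by rw [pow_mul]; norm_num
  calc μ {ω | 2 * #{i ∈ range n | Z i ω} ≤ n}
      ≤ n.choose k * q ^ k := by
        simpa using (measure_mono hsub).trans
          (hZ.measure_le_card_filter_le (measurableSet_singleton false) hq (range n) k)
    _ ≤ 4 ^ k * q ^ k := by gcongr
    _ = (4 * q) ^ k := (mul_pow _ _ _).symm

lemma iIndepFun.one_sub_le_measure_forall_lt_two_mul_card [IsProbabilityMeasure μ]
    (hZ : iIndepFun Z μ) (hq : ∀ i, μ (Z i ⁻¹' {false}) = q) (hq8 : 8 * q ≤ 1) :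
    1 - 16 * q ≤ μ {ω | ∀ n, 1 ≤ n → n < 2 * #{i ∈ range n | Z i ω}} := by
  set M := {ω | ∀ n, 1 ≤ n → n < 2 * #{i ∈ range n | Z i ω}}
  set r := 4 * q
  have hr : r ≤ 2⁻¹ := by
    rw [ENNReal.le_inv_iff_mul_le, mul_comm, ← mul_assoc]
    norm_num [hq8]
  have hlost : μ Mᶜ ≤ 16 * q :=
    calc μ Mᶜ ≤ μ (⋃ n : ℕ, {ω | 2 * #{i ∈ range (n + 1) | Z i ω} ≤ n + 1}) := by
          refine measure_mono fun ω hω => ?_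
          simp only [M, Set.mem_compl_iff, Set.mem_ofPred_eq, not_forall, not_lt] at hω
          obtain ⟨n, hn, hlt⟩ := hω
          exact Set.mem_iUnion.2 ⟨n - 1, by rwa [Nat.sub_add_cancel hn]⟩
      _ ≤ ∑' n : ℕ, r ^ (n + 1 - (n + 1) / 2) :=
          (measure_iUnion_le _).trans
            (ENNReal.tsum_le_tsum fun n => hZ.measure_two_mul_card_le hq (n + 1))
      _ = 2 * (r * (1 - r)⁻¹) := by
          rw [← ENNReal.tsum_pow_div_two_add_one]
          exact tsum_congr fun n => by congr 1; omega
      _ ≤ 2 * (r * 2) := by gcongr; exact ENNReal.inv_one_sub_le_two hr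
      _ = 16 * q := by ring
  calc 1 - 16 * q ≤ 1 - μ Mᶜ := tsub_le_tsub_left hlost 1
    _ ≤ μ M := by
        rw [tsub_le_iff_right, ← measure_univ (μ := μ)]
        exact measure_univ_le_add_compl M

end Majority

end ProbabilityTheory

theorem stmt10 :
    ∀ ε : ℝ, 0 < ε → ∃ p₀ : ℝ≥0∞, p₀ < 1 ∧
      ∀ (p : ℝ≥0∞) (hp : p ≤ 1), p₀ < p →
        ∀ (Ω : Type) (_ : MeasurableSpace Ω) (μ : Measure Ω), IsProbabilityMeasure μ →
          ∀ Z : ℕ → Ω → Bool,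
            iIndepFun Z μ →
            (∀ n, μ.map (Z n) = (PMF.bernoulli p.toNNReal (by simpa using ENNReal.toNNReal_mono ENNReal.one_ne_top hp)).toMeasure) →
            1 - ENNReal.ofReal ε ≤
              μ {ω | ∀ n : ℕ, 1 ≤ n →
                (n : ℝ) / 2 < ∑ i ∈ Finset.range n, (if Z i ω then (1 : ℝ) else 0)} := by
  intro ε hε
  set d : ℝ≥0∞ := min 8⁻¹ (ENNReal.ofReal ε / 16)
  have hd : d ≠ 0 := by simp [d, hε]
  refine ⟨1 - d, ENNReal.sub_lt_self ENNReal.one_ne_top one_ne_zero hd, ?_⟩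
  intro p hp hpd Ω _ μ _ Z hZ hlaw
  have hq : ∀ i, μ (Z i ⁻¹' {false}) = 1 - p := fun i => by
    rw [measure_preimage_singleton_of_map_eq_toMeasure (hlaw i)]
    change ((1 - p.toNNReal : NNReal) : ℝ≥0∞) = 1 - p
    rw [ENNReal.coe_sub, ENNReal.coe_one,
      ENNReal.coe_toNNReal (ne_top_of_le_ne_top ENNReal.one_ne_top hp)]
  have hqd : 1 - p ≤ d := tsub_le_iff_tsub_le.1 hpd.le
  have hq8 : 8 * (1 - p) ≤ 1 := by
    calc 8 * (1 - p) ≤ 8 * 8⁻¹ := by gcongr; exact hqd.trans (min_le_left _ _)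
      _ = 1 := ENNReal.mul_inv_cancel (by norm_num) (by norm_num)
  have hq16 : 16 * (1 - p) ≤ ENNReal.ofReal ε := by
    calc 16 * (1 - p) ≤ 16 * (ENNReal.ofReal ε / 16) := by
          gcongr; exact hqd.trans (min_le_right _ _)
      _ = ENNReal.ofReal ε := ENNReal.mul_div_cancel (by norm_num) (by norm_num)
  have hmajority : ∀ ω (n : ℕ), ((n : ℝ) / 2 < ∑ i ∈ range n, (if Z i ω then (1 : ℝ) else 0)) ↔
      n < 2 * #{i ∈ range n | Z i ω} := fun ω n => by
    rw [sum_boole, div_lt_iff₀ two_pos, mul_comm]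
    norm_cast
  simp only [hmajority]
  exact (tsub_le_tsub_left hq16 1).trans (hZ.one_sub_le_measure_forall_lt_two_mul_card hq hq8)
end

section
/- Let P_n = (1/n) Σ_{i=1}^n δ_{(X_i,Y_i)} with X_1,...,X_n pairwise distinct points of R^d, let ξ have density f_ξ independent of a pair (X,Y) ~ P_n, and let P_n^{*ξ} be the law of (X+ξ, Y+ξ). Then for (X,Y) ~ P_n^{*ξ}, almost surely E[Y - X | X] = (Σ_{i=1}^n (Y_i - X_i) f_ξ(X - X_i)) / (Σ_{i=1}^n f_ξ(X - X_i)). -/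
open MeasureTheory
open scoped ENNReal

/-
Given the atom (X_i, Y_i), the smoothed pair (X_i + ξ, Y_i + ξ) lies on the line
y = x + (Y_i - X_i) and its first coordinate has density f_ξ(· - X_i). So P_n^{*ξ} is a mixture
of measures carried by graphs over the first coordinate, with densities n⁻¹ f_ξ(· - X_i). Since
Y - X is the constant Y_i - X_i on the i-th graph, integrating over cylinders {X ∈ A} identifies
E[Y - X | X] as the average of these constants weighted by the densities at X.
-/

namespace Finset

theorem norm_centerMass_le {ι E : Type*} [SeminormedAddCommGroup E] [NormedSpace ℝ E]
    (t : Finset ι) {w : ι → ℝ} (hw : ∀ i ∈ t, 0 ≤ w i) (z : ι → E) :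
    ‖t.centerMass w z‖ ≤ ∑ i ∈ t, ‖z i‖ := by
  rcases (sum_nonneg hw).eq_or_lt with hsum | hsum
  · simpa [centerMass, ← hsum] using sum_nonneg fun i _ => norm_nonneg (z i)
  · simpa using (convex_closedBall (0 : E) (∑ i ∈ t, ‖z i‖)).centerMass_mem hw hsum
      fun i hi => mem_closedBall_zero_iff.mpr
        (single_le_sum (fun j _ => norm_nonneg (z j)) hi)

theorem sum_smul_centerMass {ι E : Type*} [AddCommGroup E] [Module ℝ E]
    (t : Finset ι) {w : ι → ℝ} (hw : ∀ i ∈ t, 0 ≤ w i) (z : ι → E) :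
    (∑ i ∈ t, w i) • t.centerMass w z = ∑ i ∈ t, w i • z i := by
  by_cases hsum : ∑ i ∈ t, w i = 0
  · have hw0 := (sum_eq_zero_iff_of_nonneg hw).mp hsum
    rw [hsum, zero_smul, eq_comm]
    exact sum_eq_zero fun i hi => by rw [hw0 i hi, zero_smul]
  · exact smul_inv_smul₀ hsum _

end Finset

theorem MeasureTheory.Measure.finsetSum_prod {ι α β : Type*} [MeasurableSpace α]
    [MeasurableSpace β] (s : Finset ι) (m : ι → Measure α) (ν : Measure β) [SFinite ν] :
    (∑ i ∈ s, m i).prod ν = ∑ i ∈ s, (m i).prod ν := by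
  rw [← Measure.sum_coe_finset, Measure.prod_sum_left,
    Measure.sum_coe_finset s fun i => (m i).prod ν]

noncomputable def graphMixture {ι E F : Type*} [MeasurableSpace E] [MeasurableSpace F]
    (ρ : Measure E) (s : Finset ι) (φ : ι → E → F) (g : ι → E → ℝ) : Measure (E × F) :=
  ∑ i ∈ s, (ρ.withDensity fun u => ENNReal.ofReal (g i u)).map fun u => (u, φ i u)

section graphMixture

variable {ι E F G : Type*} [MeasurableSpace E] [MeasurableSpace F] [NormedAddCommGroup G]
  {ρ : Measure E} {s : Finset ι} {φ : ι → E → F} {g : ι → E → ℝ}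

theorem isFiniteMeasure_graphMixture (hg : ∀ i, Integrable (g i) ρ) :
    IsFiniteMeasure (graphMixture ρ s φ g) := by
  have := fun i => isFiniteMeasure_withDensity_ofReal (hg i).2
  unfold graphMixture
  infer_instance

theorem integrable_graphMixture_of_const_on_graphs (hφ : ∀ i, Measurable (φ i))
    (hg : ∀ i, Integrable (g i) ρ) {H : E × F → G} (hH : StronglyMeasurable H) {w : ι → G}
    (hw : ∀ i ∈ s, ∀ u, H (u, φ i u) = w i) :
    Integrable H (graphMixture ρ s φ g) := by
  refine integrable_finsetSum_measure.mpr fun i hi => ?_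
  refine (integrable_map_measure hH.aestronglyMeasurable
    (measurable_id.prodMk (hφ i)).aemeasurable).mpr ?_
  have := isFiniteMeasure_withDensity_ofReal (hg i).2
  exact (integrable_const (w i)).congr (ae_of_all _ fun u => (hw i hi u).symm)

theorem setIntegral_fst_preimage_graphMixture [NormedSpace ℝ G] (hφ : ∀ i, Measurable (φ i))
    (hg : ∀ i, Measurable (g i)) (hg₀ : ∀ i u, 0 ≤ g i u) {A : Set E} (hA : MeasurableSet A)
    {H : E × F → G} (hH : Integrable H (graphMixture ρ s φ g)) :
    ∫ z in Prod.fst ⁻¹' A, H z ∂graphMixture ρ s φ g =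
      ∑ i ∈ s, ∫ u in A, g i u • H (u, φ i u) ∂ρ := by
  have hS : MeasurableSet (Prod.fst ⁻¹' A : Set (E × F)) := measurable_fst hA
  rw [graphMixture] at hH ⊢
  have hHi := integrable_finsetSum_measure.mp hH
  rw [← integral_indicator hS, integral_finsetSum_measure fun i hi => (hHi i hi).indicator hS]
  refine Finset.sum_congr rfl fun i hi => ?_
  rw [integral_indicator hS, setIntegral_map hS (hHi i hi).aestronglyMeasurable
    (measurable_id.prodMk (hφ i)).aemeasurable]
  exact (setIntegral_withDensity_eq_setIntegral_smul (hg i).real_toNNReal _ hA).trans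
    (setIntegral_congr_fun hA fun u _ => by rw [NNReal.smul_def, Real.coe_toNNReal _ (hg₀ i u)])

theorem condExp_fst_graphMixture [NormedSpace ℝ G] [CompleteSpace G]
    (hφ : ∀ i, Measurable (φ i)) (hg : ∀ i, Measurable (g i)) (hg₀ : ∀ i u, 0 ≤ g i u)
    (hgi : ∀ i, Integrable (g i) ρ) {H : E × F → G} (hH : StronglyMeasurable H) {w : ι → G}
    (hw : ∀ i ∈ s, ∀ u, H (u, φ i u) = w i) :
    (graphMixture ρ s φ g)[H | MeasurableSpace.comap Prod.fst ‹_›] =ᵐ[graphMixture ρ s φ g]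
      fun z => s.centerMass (fun i => g i z.1) w := by
  have := isFiniteMeasure_graphMixture (s := s) (φ := φ) hgi
  have hHi := integrable_graphMixture_of_const_on_graphs hφ hgi hH hw
  set K : E → G := fun u => s.centerMass (fun i => g i u) w
  have hK : StronglyMeasurable K :=
    (Finset.measurable_sum s fun i _ => hg i).inv.stronglyMeasurable.smul
      (Finset.stronglyMeasurable_fun_sum s fun i _ =>
        (hg i).stronglyMeasurable.smul_const (w i))
  have hKbdd : ∀ u, ‖K u‖ ≤ ∑ i ∈ s, ‖w i‖ := fun u =>
    s.norm_centerMass_le (fun i _ => hg₀ i u) w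
  have hKi : Integrable (fun z : E × F => K z.1) (graphMixture ρ s φ g) :=
    ⟨(hK.comp_measurable measurable_fst).aestronglyMeasurable,
      .of_bounded (ae_of_all _ fun z => hKbdd z.1)⟩
  refine (ae_eq_condExp_of_forall_setIntegral_eq measurable_fst.comap_le hHi
    (fun _ _ _ => hKi.integrableOn) ?_
    (hK.comp_measurable (Measurable.of_comap_le le_rfl)).aestronglyMeasurable).symm
  rintro _ ⟨A, hA, rfl⟩ _
  rw [setIntegral_fst_preimage_graphMixture hφ hg hg₀ hA hKi,
    setIntegral_fst_preimage_graphMixture hφ hg hg₀ hA hHi]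
  have hKmem : MemLp K ⊤ (ρ.restrict A) :=
    memLp_top_of_bound hK.aestronglyMeasurable _ (ae_of_all _ hKbdd)
  calc ∑ i ∈ s, ∫ u in A, g i u • K u ∂ρ
      = ∫ u in A, ∑ i ∈ s, g i u • K u ∂ρ :=
        (integral_finsetSum _ fun i _ => (hgi i).integrableOn.smul_of_top_left hKmem).symm
    _ = ∫ u in A, ∑ i ∈ s, g i u • w i ∂ρ := by
        simp_rw [← Finset.sum_smul]
        exact integral_congr_ae
          (ae_of_all _ fun u => s.sum_smul_centerMass (fun i _ => hg₀ i u) w)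
    _ = ∑ i ∈ s, ∫ u in A, g i u • H (u, φ i u) ∂ρ :=
        (integral_finsetSum _ fun i _ => (hgi i).integrableOn.smul_const (w i)).trans
          (Finset.sum_congr rfl fun i hi => setIntegral_congr_fun hA fun u _ => by rw [hw i hi u])

end graphMixture

section shift

variable {E : Type*} [AddCommGroup E] [MeasurableSpace E] [MeasurableAdd₂ E] [MeasurableNeg E]
  (μ : Measure E) [μ.IsAddLeftInvariant] {h : E → ℝ≥0∞}

theorem map_const_add_withDensity (a : E) (hh : Measurable h) :
    (μ.withDensity h).map (a + ·) = μ.withDensity fun u => h (u - a) := by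
  ext S hS
  rw [Measure.map_apply (measurable_const_add a) hS,
    withDensity_apply _ (hS.preimage (measurable_const_add a)), withDensity_apply _ hS]
  refine Eq.trans ?_ ((measurePreserving_add_left μ a).setLIntegral_comp_preimage hS
    (hh.comp (measurable_sub_const a)))
  simp only [add_sub_cancel_left]

variable [SFinite μ]

theorem map_shift_dirac_prod_withDensity (a b : E) (hh : Measurable h) :
    ((Measure.dirac (a, b)).prod (μ.withDensity h)).map (fun q => (q.1.1 + q.2, q.1.2 + q.2)) =
      (μ.withDensity fun u => h (u - a)).map fun u => (u, u + (b - a)) := by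
  have hshift : Measurable fun q : (E × E) × E => (q.1.1 + q.2, q.1.2 + q.2) := by fun_prop
  rw [Measure.dirac_prod, Measure.map_map hshift measurable_prodMk_left,
    ← map_const_add_withDensity μ a hh, Measure.map_map (by fun_prop) (measurable_const_add a)]
  congr 1
  funext ξ
  simp only [Function.comp_apply, Prod.mk.injEq, true_and]
  abel

theorem map_shift_empirical_prod_eq_graphMixture {ι : Type*} (c : ℝ≥0∞) (s : Finset ι)
    (X Y : ι → E) {f : E → ℝ} (hf : Measurable f) :
    ((c • ∑ i ∈ s, Measure.dirac (X i, Y i)).prod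
        (μ.withDensity fun x => ENNReal.ofReal (f x))).map
        (fun q => (q.1.1 + q.2, q.1.2 + q.2)) =
      graphMixture (c • μ) s (fun i u => u + (Y i - X i)) (fun i u => f (u - X i)) := by
  have hshift : Measurable fun q : (E × E) × E => (q.1.1 + q.2, q.1.2 + q.2) := by fun_prop
  rw [Measure.prod_smul_left, Measure.map_smul, Measure.finsetSum_prod,
    Measure.map_finset_sum hshift.aemeasurable, graphMixture, Finset.smul_sum]
  refine Finset.sum_congr rfl fun i _ => ?_
  rw [map_shift_dirac_prod_withDensity μ _ _ hf.ennreal_ofReal, withDensity_smul_measure,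
    Measure.map_smul]

end shift

theorem stmt16_general {d : ℕ} (n : ℕ) (hn : 0 < n)
    (X Y : ℕ → EuclideanSpace ℝ (Fin d))
    (f : EuclideanSpace ℝ (Fin d) → ℝ)
    (hf : Measurable f) (hfpos : ∀ x, 0 < f x)
    (hfdens : ∫ x, f x = 1)
    (Pn : Measure (EuclideanSpace ℝ (Fin d) × EuclideanSpace ℝ (Fin d)))
    (hPn : Pn = ((n : ℝ≥0∞))⁻¹ • ∑ i ∈ Finset.range n, Measure.dirac (X i, Y i))
    (νξ : Measure (EuclideanSpace ℝ (Fin d)))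
    (hνξ : νξ = volume.withDensity (fun x => ENNReal.ofReal (f x)))
    (Pnξ : Measure (EuclideanSpace ℝ (Fin d) × EuclideanSpace ℝ (Fin d)))
    (hPnξ : Pnξ = Measure.map (fun q => (q.1.1 + q.2, q.1.2 + q.2)) (Pn.prod νξ))
    (mX : MeasurableSpace (EuclideanSpace ℝ (Fin d) × EuclideanSpace ℝ (Fin d)))
    (hmX : mX = MeasurableSpace.comap Prod.fst inferInstance) :
    Pnξ[(fun z => z.2 - z.1) | mX] =ᵐ[Pnξ]
      fun z => (∑ i ∈ Finset.range n, f (z.1 - X i))⁻¹ •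
        ∑ i ∈ Finset.range n, f (z.1 - X i) • (Y i - X i) := by
  subst hPn hνξ hPnξ hmX
  have hfi : Integrable f := Integrable.of_integral_ne_zero (by rw [hfdens]; exact one_ne_zero)
  have hn' : (n : ℝ≥0∞)⁻¹ ≠ ⊤ := ENNReal.inv_ne_top.mpr (by exact_mod_cast hn.ne')
  rw [map_shift_empirical_prod_eq_graphMixture volume _ _ X Y hf]
  exact condExp_fst_graphMixture (fun i => by fun_prop)
    (fun i => hf.comp (measurable_sub_const _)) (fun i u => (hfpos _).le)
    (fun i => (hfi.comp_sub_right (X i)).smul_measure hn')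
    (continuous_snd.sub continuous_fst).stronglyMeasurable fun i _ u => add_sub_cancel_left u _

theorem stmt16 {d : ℕ} (n : ℕ) (hn : 0 < n)
    (X Y : ℕ → EuclideanSpace ℝ (Fin d))
    (hdist : ∀ i j, i < n → j < n → i ≠ j → X i ≠ X j)
    (f : EuclideanSpace ℝ (Fin d) → ℝ)
    (hf : Measurable f) (hfpos : ∀ x, 0 < f x)
    (hfdens : ∫ x, f x = 1)
    (Pn : Measure (EuclideanSpace ℝ (Fin d) × EuclideanSpace ℝ (Fin d)))
    (hPn : Pn = ((n : ℝ≥0∞))⁻¹ • ∑ i ∈ Finset.range n, Measure.dirac (X i, Y i))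
    (νξ : Measure (EuclideanSpace ℝ (Fin d)))
    (hνξ : νξ = volume.withDensity (fun x => ENNReal.ofReal (f x)))
    (Pnξ : Measure (EuclideanSpace ℝ (Fin d) × EuclideanSpace ℝ (Fin d)))
    (hPnξ : Pnξ = Measure.map (fun q => (q.1.1 + q.2, q.1.2 + q.2)) (Pn.prod νξ))
    (mX : MeasurableSpace (EuclideanSpace ℝ (Fin d) × EuclideanSpace ℝ (Fin d)))
    (hmX : mX = MeasurableSpace.comap Prod.fst inferInstance) :
    Pnξ[(fun z => z.2 - z.1) | mX] =ᵐ[Pnξ]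
      fun z => (∑ i ∈ Finset.range n, f (z.1 - X i))⁻¹ •
        ∑ i ∈ Finset.range n, f (z.1 - X i) • (Y i - X i) :=
  stmt16_general n hn X Y f hf hfpos hfdens Pn hPn νξ hνξ Pnξ hPnξ mX hmX
end

section
/- For any real s > 2 and d ≥ 1, the sum Σ_{l ≥ 0} 2^{l/2} / max(1, ⌊(2^{2^l})^{1/d}⌋ - 1) is bounded above by L·√d for a universal constant L independent of d. -/
/-!
Split the series at the index `m` with `2d ≤ 2^m ≤ 4d`, so that `√2^m ≤ 2√d`. Below `m` the
denominators are at least `1` and the numerators `√2^l` form a geometric series, of sum at most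
`3 √2^m`. From `m` on, the `d`-th root of `2^(2^(k+m))` is at least `4^(k+1)`, so the denominator
exceeds `2 · 4^k` and the terms are at most `√2^m / 2 / 2^k`, of sum `√2^m`.
-/

open Real Finset

noncomputable def chainingTerm (d l : ℕ) : ℝ :=
  (2 : ℝ) ^ ((l : ℝ) / 2) / max 1 ((⌊((2 : ℝ) ^ ((2 : ℕ) ^ l : ℕ)) ^ ((1 : ℝ) / d)⌋ : ℝ) - 1)

lemma half_le_floor_sub_one {x : ℝ} (hx : 4 ≤ x) : x / 2 ≤ ⌊x⌋ - 1 := by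
  linarith [Int.sub_one_lt_floor x]

lemma le_rpow_one_div_of_pow_le {x y : ℝ} {d : ℕ} (hx : 0 ≤ x) (hd : 0 < d) (h : x ^ d ≤ y) :
    x ≤ y ^ ((1 : ℝ) / d) := by
  rwa [one_div, le_rpow_inv_iff_of_pos hx (le_trans (pow_nonneg hx d) h) (by positivity),
    rpow_natCast]

lemma two_rpow_half_natCast (l : ℕ) : (2 : ℝ) ^ ((l : ℝ) / 2) = √2 ^ l := by
  rw [show (l : ℝ) / 2 = 1 / 2 * l by ring, rpow_mul zero_le_two, rpow_natCast, ← sqrt_eq_rpow]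

lemma geom_sum_sqrt_two_le (m : ℕ) : ∑ l ∈ range m, √2 ^ l ≤ 3 * √2 ^ m := by
  have h : 4 / 3 ≤ √2 := by
    rw [le_sqrt (by norm_num) zero_le_two]
    norm_num
  rw [geom_sum_eq (by linarith) m, div_le_iff₀ (by linarith)]
  nlinarith [pow_nonneg (sqrt_nonneg 2) m]

lemma sqrt_two_pow_le_two_mul_sqrt {m d : ℕ} (h : 2 ^ m ≤ 4 * d) : √2 ^ m ≤ 2 * √d := by
  have hsq : (√2 ^ m) ^ 2 = 2 ^ m := by
    rw [← pow_mul, mul_comm, pow_mul, sq_sqrt zero_le_two]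
  rw [show (2 : ℝ) * √d = √(4 * d) by
      rw [sqrt_mul zero_le_four, show (4 : ℝ) = 2 ^ 2 by norm_num, sqrt_sq zero_le_two],
    le_sqrt (by positivity) (by positivity), hsq]
  exact_mod_cast h

lemma exists_two_pow_mem_Icc {d : ℕ} (hd : 0 < d) : ∃ m, 2 * d ≤ 2 ^ m ∧ 2 ^ m ≤ 4 * d := by
  refine ⟨Nat.log 2 d + 2, ?_, ?_⟩
  · have := Nat.lt_pow_succ_log_self (b := 2) (by norm_num) d
    rw [pow_succ, pow_succ] at *
    omega
  · have := Nat.pow_log_le_self 2 hd.ne'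
    rw [pow_succ, pow_succ]
    omega

lemma tsum_le_sum_range_add_tsum {f g : ℕ → ℝ} (hf : ∀ n, 0 ≤ f n) (hg : Summable g) (m : ℕ)
    (h : ∀ k, f (k + m) ≤ g k) : ∑' n, f n ≤ ∑ n ∈ range m, f n + ∑' k, g k := by
  have htail : Summable (fun k => f (k + m)) := hg.of_nonneg_of_le (fun k => hf _) h
  rw [← ((summable_nat_add_iff m).mp htail).sum_add_tsum_nat_add m]
  exact add_le_add_right (htail.tsum_le_tsum h hg) _

lemma chainingTerm_nonneg (d l : ℕ) : 0 ≤ chainingTerm d l :=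
  div_nonneg (rpow_nonneg zero_le_two _) (zero_le_one.trans (le_max_left _ _))

lemma chainingTerm_le (d l : ℕ) : chainingTerm d l ≤ √2 ^ l := by
  rw [← two_rpow_half_natCast]
  exact div_le_self (rpow_nonneg zero_le_two _) (le_max_left _ _)

lemma four_pow_le_root {d m : ℕ} (hd : 0 < d) (hm : 2 * d ≤ 2 ^ m) (k : ℕ) :
    (4 : ℝ) ^ (k + 1) ≤ ((2 : ℝ) ^ ((2 : ℕ) ^ (k + m) : ℕ)) ^ ((1 : ℝ) / d) := by
  refine le_rpow_one_div_of_pow_le (by positivity) hd ?_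
  have hexp : 2 * (k + 1) * d ≤ 2 ^ (k + m) := by
    have hk : k + 1 ≤ 2 ^ k := Nat.lt_two_pow_self
    rw [pow_add]
    nlinarith
  calc ((4 : ℝ) ^ (k + 1)) ^ d = 2 ^ (2 * (k + 1) * d) := by
        rw [mul_assoc, pow_mul, pow_mul]; norm_num
    _ ≤ 2 ^ (2 ^ (k + m)) := pow_le_pow_right₀ one_le_two hexp

lemma chainingTerm_add_le {d m : ℕ} (hd : 0 < d) (hm : 2 * d ≤ 2 ^ m) (k : ℕ) :
    chainingTerm d (k + m) ≤ √2 ^ m / 2 / 2 ^ k := by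
  set X := ((2 : ℝ) ^ ((2 : ℕ) ^ (k + m) : ℕ)) ^ ((1 : ℝ) / d)
  have hX : (4 : ℝ) ^ (k + 1) ≤ X := four_pow_le_root hd hm k
  have hden : 2 * 4 ^ k ≤ max 1 ((⌊X⌋ : ℝ) - 1) := by
    refine le_trans ?_ ((half_le_floor_sub_one ?_).trans (le_max_right _ _))
    · rw [pow_succ] at hX; linarith
    · exact (le_self_pow₀ (by norm_num) k.succ_ne_zero).trans hX
  have hsqrt : √2 ^ k ≤ 2 ^ k := pow_le_pow_left₀ (sqrt_nonneg 2) (by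
    rw [sqrt_le_left zero_le_two]; norm_num) k
  calc chainingTerm d (k + m) ≤ √2 ^ (k + m) / (2 * 4 ^ k) := by
        rw [chainingTerm, two_rpow_half_natCast]
        gcongr
    _ = √2 ^ m / 2 / 2 ^ k * (√2 ^ k / 2 ^ k) := by
        rw [show (4 : ℝ) = 2 * 2 by norm_num, mul_pow]; field_simp; ring
    _ ≤ √2 ^ m / 2 / 2 ^ k := mul_le_of_le_one_right (by positivity)
        ((div_le_one (by positivity)).2 hsqrt)

theorem tsum_chainingTerm_le {d : ℕ} (hd : 0 < d) : ∑' l, chainingTerm d l ≤ 8 * √d := by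
  obtain ⟨m, hm, hm'⟩ := exists_two_pow_mem_Icc hd
  calc ∑' l, chainingTerm d l
      ≤ ∑ l ∈ range m, chainingTerm d l + ∑' k, √2 ^ m / 2 / 2 ^ k :=
        tsum_le_sum_range_add_tsum (chainingTerm_nonneg d) (summable_geometric_two' _) m
          (chainingTerm_add_le hd hm)
    _ ≤ 3 * √2 ^ m + √2 ^ m := by
        rw [tsum_geometric_two']
        gcongr
        exact (sum_le_sum fun l _ => chainingTerm_le d l).trans (geom_sum_sqrt_two_le m)
    _ ≤ 8 * √d := by linarith [sqrt_two_pow_le_two_mul_sqrt hm']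

theorem stmt19 :
    ∃ L : ℝ, 0 < L ∧
      ∀ (s : ℝ), 2 < s → ∀ d : ℕ, 1 ≤ d →
        (∑' l : ℕ, (2 : ℝ) ^ ((l : ℝ) / 2) /
            max 1 ((⌊((2 : ℝ) ^ ((2 : ℕ) ^ l : ℕ)) ^ ((1 : ℝ) / d)⌋ : ℝ) - 1))
          ≤ L * Real.sqrt d :=
  ⟨8, by norm_num, fun _ _ _ hd => tsum_chainingTerm_le hd⟩
end
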